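/- arXiv:1410.8543 — 13 statements merged into one kernel-verified Lean document; each statement's English description precedes it below -/
import Mathlib

section
/- An action can be expressed using set intersection if and only if it is idempotent and commutative. That is, for an action f : C × S → C, there exists a set X and injections identifying elements of C and S with subsets of X such that cs = c ∩ s, if and only if css = cs and cs₁s₂ = cs₂s₁ for all c ∈ C and s, s₁, s₂ ∈ S. -/
/-!
Necessity is immediate since `∩` is idempotent and commutative. For sufficiency, represent
`c` by its orbit, the set of states reachable from `c` under the action, and `s` by the set of
states it fixes, tagged with `s` itself so that distinct `s` get distinct sets. Commutativity
makes every state reachable from a fixed point of `s` again fixed by `s`, and together with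
idempotence this shows that mutually reachable states coincide, i.e. orbits determine states.
-/

open Function Relation

section Action

variable {C S : Type*} (f : C → S → C)

def Reaches : C → C → Prop :=
  ReflTransGen fun c d => ∃ s, f c s = d

variable {f}

lemma reaches_act (c : C) (s : S) : Reaches f c (f c s) :=
  ReflTransGen.single ⟨s, rfl⟩

variable (hcomm : ∀ (c : C) (s₁ s₂ : S), f (f c s₁) s₂ = f (f c s₂) s₁)
include hcomm

lemma Reaches.act_fixed {c d : C} {s : S} (hd : Reaches f c d) (hc : f c s = c) :
    f d s = d := by
  induction hd with
  | refl => exact hc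
  | tail _ hstep ih =>
    obtain ⟨t, rfl⟩ := hstep
    rw [hcomm, ih]

lemma Reaches.act {c d : C} (hd : Reaches f c d) (s : S) : Reaches f (f c s) (f d s) := by
  induction hd with
  | refl => exact ReflTransGen.refl
  | tail _ hstep ih =>
    obtain ⟨t, rfl⟩ := hstep
    exact ih.tail ⟨t, hcomm _ _ _⟩

lemma Reaches.antisymm (hidem : ∀ (c : C) (s : S), f (f c s) s = f c s) {c d : C}
    (hcd : Reaches f c d) (hdc : Reaches f d c) : c = d := by
  induction hcd with
  | refl => rfl
  | @tail b _ _ hstep ih =>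
    obtain ⟨s, rfl⟩ := hstep
    have hfix : f c s = c := hdc.act_fixed hcomm (hidem b s)
    obtain rfl := ih ((ReflTransGen.single ⟨s, rfl⟩).trans hdc)
    exact hfix.symm

end Action

theorem idempotent_and_commutative_of_eq_inter {C S X : Type*} {f : C → S → C}
    {O : C → Set X} {F : S → Set X} (hO : Injective O)
    (hOF : ∀ (c : C) (s : S), O (f c s) = O c ∩ F s) :
    (∀ (c : C) (s : S), f (f c s) s = f c s) ∧
      (∀ (c : C) (s₁ s₂ : S), f (f c s₁) s₂ = f (f c s₂) s₁) := by
  refine ⟨fun c s => hO ?_, fun c s₁ s₂ => hO ?_⟩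
  · rw [hOF, hOF, Set.inter_assoc, Set.inter_self]
  · rw [hOF, hOF, hOF, hOF, Set.inter_assoc, Set.inter_assoc, Set.inter_comm (F s₁)]

theorem exists_eq_inter_of_idempotent_of_commutative {C S : Type*} {f : C → S → C}
    (hidem : ∀ (c : C) (s : S), f (f c s) s = f c s)
    (hcomm : ∀ (c : C) (s₁ s₂ : S), f (f c s₁) s₂ = f (f c s₂) s₁) :
    ∃ (O : C → Set (C ⊕ S)) (F : S → Set (C ⊕ S)),
      Injective O ∧ Injective F ∧ ∀ (c : C) (s : S), O (f c s) = O c ∩ F s := by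
  refine ⟨fun c => Sum.elim (Reaches f c) fun _ => False,
    fun s => Sum.elim (fun d => f d s = d) (· = s), ?_, ?_, ?_⟩
  · intro c d h
    have hcd : Reaches f c d := (congrFun h (.inl d)).mpr ReflTransGen.refl
    have hdc : Reaches f d c := (congrFun h (.inl c)).mp ReflTransGen.refl
    exact hcd.antisymm hcomm hidem hdc
  · intro s₁ s₂ h
    exact (congrFun h (.inr s₁)).mp rfl
  · intro c s
    ext (d | t)
    · refine ⟨fun hd => ⟨(reaches_act c s).trans hd, hd.act_fixed hcomm (hidem c s)⟩, ?_⟩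
      rintro ⟨hd, hfix⟩
      have hreach := hd.act hcomm s
      rwa [hfix] at hreach
    · exact (and_iff_left_of_imp False.elim).symm

/-- An action `f : C → S → C` can be expressed using set intersection iff it is
idempotent and commutative (Rothschild–Yalcin). -/
theorem stmt_0 {C S : Type} (f : C → S → C) :
    (∃ (X : Type) (O : C → Set X) (F : S → Set X),
      Function.Injective O ∧ Function.Injective F ∧
      ∀ (c : C) (s : S), O (f c s) = O c ∩ F s) ↔
    ((∀ (c : C) (s : S), f (f c s) s = f c s) ∧
     (∀ (c : C) (s₁ s₂ : S), f (f c s₁) s₂ = f (f c s₂) s₁)) := by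
  constructor
  · rintro ⟨X, O, F, hO, -, hOF⟩
    exact idempotent_and_commutative_of_eq_inter hO hOF
  · rintro ⟨hidem, hcomm⟩
    exact ⟨C ⊕ S, exists_eq_inter_of_idempotent_of_commutative hidem hcomm⟩
end

section
/- If an action is idempotent and commutative, then for any c, d ∈ C and any word w ∈ S*, if dw = c then every element of the orbit of c is fixed by each letter of w; in particular cw = c. -/
/-! Commutativity moves any letter `s` of `w` to the end of `w`, so `dw` is of the form `e s` and
idempotence makes it a fixed point of `s`. Commutativity also carries a fixed point of `s` along
any word to another fixed point of `s`, so the whole orbit of `c = dw` is fixed by the letters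
of `w`. -/

namespace List

variable {C S : Type*} {f : C → S → C}

theorem apply_foldl_of_mem [RightCommutative f] (idem : ∀ c s, f (f c s) s = f c s)
    {w : List S} {s : S} (hs : s ∈ w) (d : C) :
    f (w.foldl f d) s = w.foldl f d := by
  classical
  rw [(perm_cons_erase hs).foldl_eq d, foldl_cons_eq_apply_foldl, idem]

theorem apply_foldl_of_apply_eq [RightCommutative f] {c : C} {s : S} (hc : f c s = c)
    (v : List S) : f (v.foldl f c) s = v.foldl f c := by
  rw [← foldl_cons_eq_apply_foldl (v := f), foldl_cons, hc]

theorem foldl_eq_self_of_forall_mem {c : C} {w : List S} (h : ∀ s ∈ w, f c s = c) :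
    w.foldl f c = c := by
  induction w with
  | nil => rfl
  | cons a t ih => rw [foldl_cons, h a mem_cons_self, ih fun s hs => h s (mem_cons_of_mem a hs)]

end List

/-- In an idempotent commutative action, if `dw = c` then every element of the
orbit of `c` is fixed by each letter of `w`; in particular `cw = c`. -/
theorem stmt_1 {C S : Type*} (f : C → S → C)
    (idem : ∀ (c : C) (s : S), f (f c s) s = f c s)
    (comm : ∀ (c : C) (s₁ s₂ : S), f (f c s₁) s₂ = f (f c s₂) s₁)
    (c d : C) (w : List S) (h : w.foldl f d = c) :
    (∀ (v : List S) (s : S), s ∈ w → f (v.foldl f c) s = v.foldl f c) ∧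
      w.foldl f c = c := by
  have : RightCommutative f := ⟨comm⟩
  have hfix : ∀ s ∈ w, f c s = c := fun s hs => h ▸ List.apply_foldl_of_mem idem hs d
  exact ⟨fun v s hs => List.apply_foldl_of_apply_eq (hfix s hs) v,
    List.foldl_eq_self_of_forall_mem hfix⟩
end

section
/- In an idempotent commutative action, the orbit map O : C → P(C ⊎ S) defined by O(c) = {cw | w ∈ S*} is injective: if O(c) = O(d) then c = d. -/
/-! If `c·w = d` and `d·v = c`, then `c` is fixed by `w v`, so
`d = c·w = c·(w v w) = c·(w w v) = c·(w v) = c`: commutativity lets `w` be moved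
next to its copy and idempotence absorbs the repetition. -/

namespace List

variable {C S : Type*} {f : C → S → C}

theorem foldl_eq_of_perm_of_right_comm
    (comm : ∀ (c : C) (s₁ s₂ : S), f (f c s₁) s₂ = f (f c s₂) s₁)
    {l₁ l₂ : List S} (p : l₁ ~ l₂) (c : C) : l₁.foldl f c = l₂.foldl f c :=
  p.foldl_eq' (fun x _ y _ z => comm z x y) c

theorem foldl_append_self_of_idem_of_right_comm
    (idem : ∀ (c : C) (s : S), f (f c s) s = f c s)
    (comm : ∀ (c : C) (s₁ s₂ : S), f (f c s₁) s₂ = f (f c s₂) s₁)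
    (w : List S) (c : C) : (w ++ w).foldl f c = w.foldl f c := by
  induction w generalizing c with
  | nil => rfl
  | cons a u ih =>
    calc (a :: u ++ a :: u).foldl f c = (a :: a :: (u ++ u)).foldl f c :=
          foldl_eq_of_perm_of_right_comm comm (perm_middle.cons a) c
      _ = (u ++ u).foldl f (f c a) := by rw [foldl_cons, foldl_cons, idem]
      _ = (a :: u).foldl f c := ih (f c a)

theorem eq_of_foldl_eq_of_foldl_eq
    (idem : ∀ (c : C) (s : S), f (f c s) s = f c s)
    (comm : ∀ (c : C) (s₁ s₂ : S), f (f c s₁) s₂ = f (f c s₂) s₁)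
    {c d : C} {w v : List S} (hw : w.foldl f c = d) (hv : v.foldl f d = c) : c = d := by
  have hc : (w ++ v).foldl f c = c := by rw [foldl_append, hw, hv]
  calc c = (w ++ v).foldl f c := hc.symm
    _ = (w ++ w ++ v).foldl f c := by
        rw [foldl_append (l := w ++ w), foldl_append_self_of_idem_of_right_comm idem comm,
          foldl_append]
    _ = (w ++ v ++ w).foldl f c := foldl_eq_of_perm_of_right_comm comm
        (by simpa only [append_assoc] using perm_append_comm.append_left w) c
    _ = d := by rw [foldl_append, hc, hw]

end List

/-- In an idempotent commutative action, the orbit map is injective. -/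
theorem stmt_2 {C S : Type*} (f : C → S → C)
    (idem : ∀ (c : C) (s : S), f (f c s) s = f c s)
    (comm : ∀ (c : C) (s₁ s₂ : S), f (f c s₁) s₂ = f (f c s₂) s₁) :
    Function.Injective (fun c : C => {x : C | ∃ w : List S, w.foldl f c = x}) := by
  intro c d h
  obtain ⟨w, hw⟩ := (Set.ext_iff.mp h d).mpr ⟨[], rfl⟩
  obtain ⟨v, hv⟩ := (Set.ext_iff.mp h c).mp ⟨[], rfl⟩
  exact List.eq_of_foldl_eq_of_foldl_eq idem comm hw hv
end

section
/- Any action which is idempotent and previous redundant is fully previous redundant: for all c ∈ C, s ∈ S, and words w ∈ S*, csws = cws. -/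
/-- Any idempotent, previous redundant action is fully previous redundant:
`csws = cws` for every word `w`. -/
theorem stmt_3 {C S : Type*} (f : C → S → C)
    (idem : ∀ (c : C) (s : S), f (f c s) s = f c s)
    (pr : ∀ (c : C) (s t : S), f (f (f c s) t) s = f (f c t) s)
    (c : C) (s : S) (w : List S) :
    f (w.foldl f (f c s)) s = f (w.foldl f c) s := by
  induction w generalizing c with
  | nil => exact idem c s
  | cons t w ih =>
    -- Insert a spare `s` after `t` (induction hypothesis), let it absorb the earlier `s`
    -- (previous redundancy), then drop it again.
    calc f ((t :: w).foldl f (f c s)) s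
        = f (w.foldl f (f (f (f c s) t) s)) s := (ih _).symm
      _ = f (w.foldl f (f (f c t) s)) s := by rw [pr]
      _ = f ((t :: w).foldl f c) s := ih _
end

section
/- Let F be an operation from sets to algebras turning disjoint unions into products and bijections into isomorphisms, let K be the class of subalgebras of algebras F(X), and let 1 be a one-element set. Then every algebra A ∈ K embeds into a product of copies of F(1) indexed by the set of homomorphisms from A to F(1), via the map sending a to (φ(a))_{φ ∈ Hom(A, F(1))}. -/
/-!
Since `X ≃ Σ x : X, 1`, the hypotheses give `F X ≅ F(1)^X`, so `A` embeds into a power of `F(1)`.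
The coordinate projections of that embedding are homomorphisms `A → F(1)` separating the points
of `A`, hence so do all homomorphisms `A → F(1)`.
-/

open FirstOrder

/-- The product structure on a Pi type, for an algebraic language
(one with no relation symbols): operations act componentwise. -/
noncomputable instance piStructure (L : Language) [L.IsAlgebraic] {I : Type*}
    (M : I → Type*) [∀ i, L.Structure (M i)] : L.Structure (∀ i, M i) where
  funMap f x i := Language.Structure.funMap f (fun j => x j i)
  RelMap r _ := isEmptyElim r

namespace FirstOrder.Language

variable (L : Language) [L.IsAlgebraic]

def projHom {I : Type*} (M : I → Type*) [∀ i, L.Structure (M i)] (i : I) :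
    (∀ j, M j) →[L] M i where
  toFun p := p i
  map_rel' r _ := isEmptyElim r

variable (A M : Type*) [L.Structure A] [L.Structure M]

noncomputable def evalHom : A →[L] (∀ _ : A →[L] M, M) where
  toFun a φ := φ a
  map_fun' f x := funext fun φ => φ.map_fun f x
  map_rel' r _ := isEmptyElim r

variable {L A M}

theorem evalHom_injective_of_injective_pi {I : Type*} (J : A →[L] (I → M))
    (hJ : Function.Injective J) : Function.Injective (evalHom L A M) := by
  intro a b hab
  apply hJ
  funext i
  exact congrFun hab ((projHom L (fun _ : I => M) i).comp J)

theorem nonempty_equiv_pi_of_sigma_equiv_pi (F : Type u → Type v) [∀ X, L.Structure (F X)]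
    (hbij : ∀ {X Y : Type u}, X ≃ Y → Nonempty (F X ≃[L] F Y))
    (hdisj : ∀ {I : Type u} (X : I → Type u), Nonempty (F (Σ i, X i) ≃[L] (∀ i, F (X i))))
    (X : Type u) : Nonempty (F X ≃[L] (X → F PUnit)) := by
  obtain ⟨g⟩ := hbij (Equiv.sigmaUnique X fun _ => PUnit).symm
  obtain ⟨h⟩ := hdisj fun _ : X => PUnit
  exact ⟨h.comp g⟩

end FirstOrder.Language

open FirstOrder.Language in
/-- If `F` turns disjoint unions into products and bijections into
isomorphisms, then every algebra embeddable into some `F(X)` embeds into the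
product of copies of `F(1)` indexed by `Hom(A, F(1))`, via `a ↦ (φ(a))_φ`. -/
theorem stmt_6 (L : Language) [L.IsAlgebraic] (F : Type u → Type v)
    [St : ∀ X, L.Structure (F X)]
    (hbij : ∀ {X Y : Type u}, X ≃ Y → Nonempty (F X ≃[L] F Y))
    (hdisj : ∀ {I : Type u} (X : I → Type u),
      Nonempty (F (Σ i, X i) ≃[L] (∀ i, F (X i))))
    (A : Type w) [L.Structure A] (hA : ∃ X : Type u, Nonempty (A ↪[L] F X)) :
    ∃ e : A ↪[L] (∀ _ : A →[L] F PUnit, F PUnit),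
      ∀ (a : A) (φ : A →[L] F PUnit), e a φ = φ a := by
  obtain ⟨X, ⟨j⟩⟩ := hA
  obtain ⟨h⟩ := nonempty_equiv_pi_of_sigma_equiv_pi F hbij hdisj X
  have hinj := evalHom_injective_of_injective_pi (h.toHom.comp j.toHom)
    (h.injective.comp j.injective)
  exact ⟨Embedding.ofInjective hinj, fun _ _ => rfl⟩
end

section
/- Every equation between terms of sort C that holds universally in all full ↑↓-actions follows from idempotence (css = cs) and previous redundance (csts = cts). Concretely: if cs₁⋯sₙ = dt₁⋯tₘ (with c, d variables of sort C and sᵢ, tⱼ variables of sort S) holds in the action F(1), then c and d are the same variable, and after deleting all but the last occurrence of each repeated S-variable on each side, the two sides become identical words. -/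
/-!
Every element of `F(1)`'s `S`-sort is the identity or a constant. Hence acting by `s` is
idempotent and is cancelled by any later action by `s` (a constant overwrites it, the identity
lets it through), so a word acts as its deduplication. Conversely a word is read off from its
action: the assignment `z ↦ [z = x]` returns whether the word ends in `x`, and assigning the
identity to that last letter peels it off, so two duplicate-free words with the same action are
equal. Assigning the identity to every `S`-variable separates distinct `C`-variables.
-/

/-- The `S`-sort of the action `F(1)`: the identity `(1,0)`, the constant
`false` operation `(0,0)` and the constant `true` operation `(1,1)`. -/
def SF1 : Type := {g : Bool → Bool // g = id ∨ g = (fun _ => false) ∨ g = (fun _ => true)}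

/-- The action map of `F(1)`. -/
def actF1 (c : Bool) (s : SF1) : Bool := s.1 c

namespace SF1

protected def id : SF1 := ⟨id, Or.inl rfl⟩

def const (b : Bool) : SF1 := ⟨fun _ => b, by cases b <;> simp⟩

theorem eq_id_or_eq_const (s : SF1) : s = SF1.id ∨ ∃ b, s = const b := by
  rcases s with ⟨g, rfl | rfl | rfl⟩
  exacts [Or.inl rfl, Or.inr ⟨false, rfl⟩, Or.inr ⟨true, rfl⟩]

end SF1

@[simp] theorem actF1_id (b : Bool) : actF1 b SF1.id = b := rfl

@[simp] theorem actF1_const (b c : Bool) : actF1 b (SF1.const c) = c := rfl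

theorem actF1_actF1_self (b : Bool) (s : SF1) : actF1 (actF1 b s) s = actF1 b s := by
  rcases s.eq_id_or_eq_const with rfl | ⟨c, rfl⟩ <;> simp

theorem foldl_actF1_actF1_of_mem {s : SF1} {l : List SF1} (hs : s ∈ l) (b : Bool) :
    l.foldl actF1 (actF1 b s) = l.foldl actF1 b := by
  induction l generalizing b with
  | nil => cases hs
  | cons t l ih =>
    rcases List.mem_cons.mp hs with rfl | hsl
    · simp only [List.foldl_cons, actF1_actF1_self]
    · rcases t.eq_id_or_eq_const with rfl | ⟨c, rfl⟩
      · simpa only [List.foldl_cons, actF1_id] using ih hsl b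
      · simp only [List.foldl_cons, actF1_const]

theorem foldl_actF1_map_dedup {α : Type*} [DecidableEq α] (σ : α → SF1) (l : List α)
    (b : Bool) : (l.dedup.map σ).foldl actF1 b = (l.map σ).foldl actF1 b := by
  induction l generalizing b with
  | nil => rfl
  | cons a l ih =>
    by_cases ha : a ∈ l
    · rw [List.dedup_cons_of_mem ha, ih, List.map_cons, List.foldl_cons,
        foldl_actF1_actF1_of_mem (List.mem_map_of_mem ha)]
    · rw [List.dedup_cons_of_notMem ha, List.map_cons, List.map_cons, List.foldl_cons,
        List.foldl_cons, ih]

theorem foldl_actF1_map_id {α : Type*} (l : List α) (b : Bool) :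
    (l.map fun _ => SF1.id).foldl actF1 b = b := by
  induction l with
  | nil => rfl
  | cons a l ih => simpa only [List.map_cons, List.foldl_cons, actF1_id] using ih

theorem foldl_actF1_map_update_id {α : Type*} [DecidableEq α] (σ : α → SF1) {x : α}
    {l : List α} (hx : x ∉ l) (b : Bool) :
    (l.map (Function.update σ x SF1.id)).foldl actF1 b = (l.map σ).foldl actF1 b := by
  rw [List.map_congr_left fun z hz => Function.update_of_ne (ne_of_mem_of_not_mem hz hx) _ _]

theorem foldl_actF1_map_const_decide_eq {α : Type*} [DecidableEq α] (x : α) (l : List α) :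
    (l.map fun z => SF1.const (decide (z = x))).foldl actF1 false =
      decide (l.getLast? = some x) := by
  induction l using List.reverseRecOn with
  | nil => rfl
  | append_singleton l y _ => simp

theorem getLast?_eq_of_foldl_actF1_eq {α : Type*} [DecidableEq α] {w v : List α}
    (h : ∀ (σ : α → SF1) (b : Bool), (w.map σ).foldl actF1 b = (v.map σ).foldl actF1 b) :
    w.getLast? = v.getLast? :=
  Option.ext fun x => by
    simpa only [foldl_actF1_map_const_decide_eq, decide_eq_decide] using
      h (fun z => SF1.const (decide (z = x))) false

theorem eq_of_nodup_of_foldl_actF1_eq {α : Type*} [DecidableEq α] {w v : List α}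
    (hw : w.Nodup) (hv : v.Nodup)
    (h : ∀ (σ : α → SF1) (b : Bool), (w.map σ).foldl actF1 b = (v.map σ).foldl actF1 b) :
    w = v := by
  induction w using List.reverseRecOn generalizing v with
  | nil => exact (List.getLast?_eq_none_iff.mp (getLast?_eq_of_foldl_actF1_eq h).symm).symm
  | append_singleton w x ih =>
    obtain ⟨v, rfl⟩ : ∃ v', v = v' ++ [x] :=
      List.getLast?_eq_some_iff.mp (by simp [← getLast?_eq_of_foldl_actF1_eq h])
    rw [← List.concat_eq_append, List.nodup_concat] at hw hv
    congr 1
    refine ih hw.2 hv.2 fun σ b => ?_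
    simpa only [List.map_append, List.foldl_append, List.map_singleton, List.foldl_cons,
      List.foldl_nil, Function.update_self, actF1_id, foldl_actF1_map_update_id σ hw.1,
      foldl_actF1_map_update_id σ hv.1] using h (Function.update σ x SF1.id) b

/-- The equational theory of ↑↓-actions is axiomatized by idempotence and
previous redundance.  Concretely: if the equation `c s₁ ⋯ sₙ = d t₁ ⋯ tₘ`
(with variables `c, d` of sort `C` and words `w, v` of `S`-variables) holds
in `F(1)` under every assignment, then `c` and `d` are the same variable and
after deleting all but the last occurrence of each repeated `S`-variable the
two words become identical (so the equation follows from (I) and (PR)). -/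
theorem stmt_11 {VC VS : Type*} [DecidableEq VS] (c d : VC) (w v : List VS)
    (h : ∀ (γ : VC → Bool) (σ : VS → SF1),
      (w.map σ).foldl actF1 (γ c) = (v.map σ).foldl actF1 (γ d)) :
    c = d ∧ w.dedup = v.dedup := by
  classical
  have hcd : c = d := by
    have := h (fun z => decide (z = c)) fun _ => SF1.id
    rw [foldl_actF1_map_id, foldl_actF1_map_id, decide_eq_true rfl] at this
    exact (of_decide_eq_true this.symm).symm
  subst hcd
  refine ⟨rfl, eq_of_nodup_of_foldl_actF1_eq (List.nodup_dedup w) (List.nodup_dedup v)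
    fun σ b => ?_⟩
  simpa only [foldl_actF1_map_dedup] using h (fun _ => b) σ
end

section
/- There exists a finite action which is idempotent and fully previous redundant but which has a nontrivial strong link, and hence satisfies the equational theory of ↑↓-actions without being an ↑↓-action. Specifically, let C = {c,d,e}, S = {s,t}, with cs = ds = c, ct = dt = d, es = et = e. This action satisfies css' = cs' whenever s' = s'' and auwu = awu for all a ∈ C, u ∈ S, w ∈ S*, yet c and d are strongly linked with c ≠ d. -/
/-!
The states `c` and `d` are interchangeable in this action: every letter sends them to the same
state, and the only other state `e` is a sink. So `exAct a u` depends only on whether `a = e`,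
a property that reading letters never changes; this gives `auwu = awu`. The link from `c` to `d`
passes through `e`: the letter `s` fixes `c` and `e` and sends `c` and `d` to the same state, and
the letter `t` does the same for `e` and `d`.
-/

/-- The example action: `C = {c,d,e} = Fin 3` (`c = 0`, `d = 1`, `e = 2`),
`S = {s,t} = Bool` (`s = false`, `t = true`), with `cs = ds = c`,
`ct = dt = d`, `es = et = e`. -/
def exAct (a : Fin 3) (u : Bool) : Fin 3 :=
  if a = 2 then 2 else if u then 1 else 0

section FactorThrough

variable {C S β : Type*} (f : C → S → C) (π : C → β)

theorem comp_foldl_eq_of_invariant (hπ : ∀ a u, π (f a u) = π a) (w : List S) (a : C) :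
    π (w.foldl f a) = π a := by
  induction w generalizing a with
  | nil => rfl
  | cons u w ih => rw [List.foldl_cons, ih, hπ]

theorem foldl_previous_redundant_of_factors (hπ : ∀ a u, π (f a u) = π a)
    (g : β → S → C) (hf : ∀ a u, f a u = g (π a) u) (a : C) (u : S) (w : List S) :
    f (w.foldl f (f a u)) u = f (w.foldl f a) u := by
  rw [hf, hf (w.foldl f a), comp_foldl_eq_of_invariant f π hπ,
    comp_foldl_eq_of_invariant f π hπ, hπ]

end FactorThrough

theorem exAct_previous_redundant (a : Fin 3) (u : Bool) (w : List Bool) :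
    exAct (w.foldl exAct (exAct a u)) u = exAct (w.foldl exAct a) u :=
  foldl_previous_redundant_of_factors exAct (fun a => decide (a = 2)) (by decide)
    (fun b u => if b then 2 else if u then 1 else 0) (by decide) a u w

/-- There is a finite action which is idempotent and fully previous redundant
(hence satisfies the equational theory of ↑↓-actions) but has a nontrivial
strong link, so it is not an ↑↓-action. -/
theorem stmt_12 :
    (∀ (a : Fin 3) (u : Bool), exAct (exAct a u) u = exAct a u) ∧
    (∀ (a : Fin 3) (u : Bool) (w : List Bool),
      exAct (w.foldl exAct (exAct a u)) u = exAct (w.foldl exAct a) u) ∧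
    (∃ (n : ℕ) (a : Fin (n + 1) → Fin 3) (w : Fin n → List Bool),
      a 0 = 0 ∧ a (Fin.last n) = 1 ∧
      (∀ i : Fin n, (w i).foldl exAct (a i.castSucc) = a i.castSucc ∧
        (w i).foldl exAct (a i.succ) = a i.succ ∧
        (w i).foldl exAct 0 = (w i).foldl exAct 1)) ∧
    (0 : Fin 3) ≠ 1 := by
  refine ⟨by decide, exAct_previous_redundant, ?_, by decide⟩
  exact ⟨2, ![0, 2, 1], ![[false], [true]], by decide, by decide, by decide⟩
end

section
/- If (C, S) is an idempotent and previous redundant action in which all strong links are trivial, then the induced action (C, S*) of the word monoid S* on C is also idempotent, previous redundant, and has all strong links trivial. -/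
/-! Previous redundancy passes from letters to words. For a letter `s`, induction on `x` gives
`c s x s = c x s`: the empty case is idempotency and each induction step is one use of
previous redundancy. Peeling the letters of `w` off one at a time then gives `c w x w = c x w`,
and idempotency of words is the case `x = []`. A strong link of `(C, S*)` is a strong link of
`(C, S)` once each word of words is flattened. -/

/-- All strong links in the action `f : C → S → C` are trivial. -/
def AllStrongLinksTrivial {C S : Type*} (f : C → S → C) : Prop :=
  ∀ (c d : C) (n : ℕ) (a : Fin (n + 1) → C) (w : Fin n → List S),
    a 0 = c → a (Fin.last n) = d →
    (∀ i : Fin n, (w i).foldl f (a i.castSucc) = a i.castSucc ∧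
      (w i).foldl f (a i.succ) = a i.succ ∧
      (w i).foldl f c = (w i).foldl f d) →
    c = d

section WordAction

variable {C S : Type*} (f : C → S → C)

theorem foldl_append_singleton_apply_self (idem : ∀ (c : C) (s : S), f (f c s) s = f c s)
    (pr : ∀ (c : C) (s t : S), f (f (f c s) t) s = f (f c t) s) (x : List S) (c : C) (s : S) :
    (x ++ [s]).foldl f (f c s) = (x ++ [s]).foldl f c := by
  induction x generalizing c with
  | nil => simp [idem]
  | cons t x ih =>
    simp only [List.cons_append, List.foldl_cons]
    rw [← ih, pr, ih]

theorem foldl_append_append_self (idem : ∀ (c : C) (s : S), f (f c s) s = f c s)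
    (pr : ∀ (c : C) (s t : S), f (f (f c s) t) s = f (f c t) s) (w x : List S) (c : C) :
    (w ++ x ++ w).foldl f c = (x ++ w).foldl f c := by
  induction w generalizing x c with
  | nil => simp
  | cons s w ih =>
    calc (s :: w ++ x ++ s :: w).foldl f c
        = (w ++ (x ++ [s]) ++ w).foldl f (f c s) := by simp
      _ = w.foldl f ((x ++ [s]).foldl f (f c s)) := by rw [ih, List.foldl_append]
      _ = (x ++ s :: w).foldl f c := by
        rw [foldl_append_singleton_apply_self f idem pr]
        simp

theorem AllStrongLinksTrivial.foldl (hsl : AllStrongLinksTrivial f) :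
    AllStrongLinksTrivial (fun (c : C) (w : List S) => w.foldl f c) := by
  intro c d n a w h0 hlast hlink
  refine hsl c d n a (fun i => (w i).flatten) h0 hlast fun i => ?_
  simpa only [List.foldl_flatten] using hlink i

end WordAction

/-- If `(C, S)` is idempotent, previous redundant and all its strong links are
trivial, then the same holds for the induced action `(C, S*)` of the word
monoid on `C`. -/
theorem stmt_13 {C S : Type*} (f : C → S → C)
    (idem : ∀ (c : C) (s : S), f (f c s) s = f c s)
    (pr : ∀ (c : C) (s t : S), f (f (f c s) t) s = f (f c t) s)
    (hsl : AllStrongLinksTrivial f) :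
    (∀ (c : C) (w : List S),
      w.foldl f (w.foldl f c) = w.foldl f c) ∧
    (∀ (c : C) (w x : List S),
      w.foldl f (x.foldl f (w.foldl f c)) = w.foldl f (x.foldl f c)) ∧
    AllStrongLinksTrivial (fun (c : C) (w : List S) => w.foldl f c) := by
  refine ⟨fun c w => ?_, fun c w x => ?_, hsl.foldl f⟩
  · simpa [List.foldl_append] using foldl_append_append_self f idem pr w [] c
  · simpa [List.foldl_append] using foldl_append_append_self f idem pr w x c
end

section
/- Let (C, S) be an idempotent and fully previous redundant action. Define c ∼ d if there exists s ∈ S which is not an identity operation with cs = c and ds = d, and let ≈ be the reflexive-transitive closure of ∼. Then ≈ is a congruence: c ≈ d implies cs ≈ ds for all s ∈ S. -/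
/-- `c ∼ d` iff some `s ∈ S` which is not an identity operation fixes both
`c` and `d`. -/
def simRel {C S : Type*} (f : C → S → C) (c d : C) : Prop :=
  ∃ s : S, (¬ ∀ x : C, f x s = x) ∧ f c s = c ∧ f d s = d

theorem simRel_apply_of_not_identity {C S : Type*} (f : C → S → C) {s : S}
    (idem : ∀ c : C, f (f c s) s = f c s) (hs : ¬ ∀ x : C, f x s = x) (c d : C) :
    simRel f (f c s) (f d s) :=
  ⟨s, hs, idem c, idem d⟩

theorem stmt_14_general {C S : Type*} (f : C → S → C)
    (idem : ∀ (c : C) (s : S), f (f c s) s = f c s)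
    (c d : C) (s : S) (h : Relation.ReflTransGen (simRel f) c d) :
    Relation.ReflTransGen (simRel f) (f c s) (f d s) := by
  by_cases hs : ∀ x : C, f x s = x
  · rwa [hs c, hs d]
  · exact .single (simRel_apply_of_not_identity f (idem · s) hs c d)

/-- For an idempotent, fully previous redundant action, the reflexive-transitive
closure `≈` of `∼` is a congruence: `c ≈ d` implies `cs ≈ ds`. -/
theorem stmt_14 {C S : Type*} (f : C → S → C)
    (idem : ∀ (c : C) (s : S), f (f c s) s = f c s)
    (fpr : ∀ (c : C) (s : S) (w : List S),
      f (w.foldl f (f c s)) s = f (w.foldl f c) s)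
    (c d : C) (s : S) (h : Relation.ReflTransGen (simRel f) c d) :
    Relation.ReflTransGen (simRel f) (f c s) (f d s) :=
  stmt_14_general f idem c d s h
end

section
/- In the quotient of an idempotent, fully previous redundant action (C, S) by the congruence ≈ (generated by c ∼ d when some non-identity s ∈ S fixes both c and d), every element s ∈ S acts on C/≈ as either an identity operation or a constant operation. -/
theorem stmt_15_general {C S : Type*} (f : C → S → C)
    (idem : ∀ (c : C) (s : S), f (f c s) s = f c s) :
    ∀ s : S, (∀ c : C, Relation.ReflTransGen (simRel f) (f c s) c) ∨
      (∃ d : C, ∀ c : C, Relation.ReflTransGen (simRel f) (f c s) d) := by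
  intro s
  by_cases hs : ∀ x : C, f x s = x
  · exact .inl fun c => by rw [hs c]
  · obtain ⟨x, -⟩ := not_forall.mp hs
    -- By idempotence a non-identity `s` fixes its whole image, which is therefore one `∼`-class.
    exact .inr ⟨f x s, fun c => .single ⟨s, hs, idem c s, idem x s⟩⟩

/-- In the quotient of an idempotent, fully previous redundant action by the
congruence `≈` (the reflexive-transitive closure of `∼`), every `s ∈ S` acts
as an identity operation or as a constant operation. -/
theorem stmt_15 {C S : Type*} (f : C → S → C)
    (idem : ∀ (c : C) (s : S), f (f c s) s = f c s)
    (fpr : ∀ (c : C) (s : S) (w : List S),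
      f (w.foldl f (f c s)) s = f (w.foldl f c) s) :
    ∀ s : S, (∀ c : C, Relation.ReflTransGen (simRel f) (f c s) c) ∨
      (∃ d : C, ∀ c : C, Relation.ReflTransGen (simRel f) (f c s) d) :=
  stmt_15_general f idem
end

section
/- Every ↑↓'-action is an ↑↓-action and vice versa: the algebras embeddable into some F'(X) (where S' consists of arbitrary pairs (s↓, s↑) of subsets of X acting by c ↦ (c ∩ s↓) ∪ s↑) coincide up to isomorphism with the algebras embeddable into some F(X) (where additionally s↑ ⊆ s↓ is required). In particular, F'(1) embeds into F(1 ⊎ {x}) for a one-element set 1 and a dummy element x. -/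
/-! Inside `F(X ⊕ X)`, a state `c` of `F'(X)` is encoded as `sumSet univ c` and a pair `(d, u)`
as `(sumSet univ (d ∪ u), sumSet d u)`. On the right copy `u ⊆ d ∪ u` and
`(c ∩ (d ∪ u)) ∪ u = (c ∩ d) ∪ u`; the left copy stays full, so `d`, recorded there in the upper
component, does not affect the action but makes the encoding injective. -/

/-- The `S`-sort of the full ↑↓-action on `X`. -/
def FullS (X : Type*) : Type _ := {p : Set X × Set X // p.2 ⊆ p.1}

/-- The action map of the full ↑↓-action `F(X)`. -/
def fullAct {X : Type*} (c : Set X) (s : FullS X) : Set X := (c ∩ s.1.1) ∪ s.1.2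

/-- The action map of the full ↑↓'-action `F'(X)`, where arbitrary pairs of
subsets are allowed. -/
def fullAct' {X : Type*} (c : Set X) (s : Set X × Set X) : Set X := (c ∩ s.1) ∪ s.2

/-- `(C, S, f)` embeds into `(C', S', f')` as a two-sorted action. -/
def ActEmbeds {C S C' S' : Type*} (f : C → S → C) (f' : C' → S' → C') : Prop :=
  ∃ (iC : C → C') (iS : S → S'), Function.Injective iC ∧ Function.Injective iS ∧
    ∀ (c : C) (s : S), iC (f c s) = f' (iC c) (iS s)

theorem ActEmbeds.trans {C S C' S' C'' S'' : Type*} {f : C → S → C} {g : C' → S' → C'}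
    {h : C'' → S'' → C''} (hfg : ActEmbeds f g) (hgh : ActEmbeds g h) : ActEmbeds f h := by
  obtain ⟨iC, iS, hiC, hiS, hi⟩ := hfg
  obtain ⟨jC, jS, hjC, hjS, hj⟩ := hgh
  exact ⟨jC ∘ iC, jS ∘ iS, hjC.comp hiC, hjS.comp hiS, fun c s => by simp [hi, hj]⟩

theorem actEmbeds_fullAct_fullAct' (X : Type*) :
    ActEmbeds (fullAct (X := X)) (fullAct' (X := X)) :=
  ⟨id, Subtype.val, Function.injective_id, Subtype.val_injective, fun _ _ => rfl⟩

def sumSet {X Y : Type*} (a : Set X) (b : Set Y) : Set (X ⊕ Y) := Sum.elim a b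

@[simp] theorem inl_mem_sumSet {X Y : Type*} {a : Set X} {b : Set Y} {x : X} :
    Sum.inl x ∈ sumSet a b ↔ x ∈ a := Iff.rfl

@[simp] theorem inr_mem_sumSet {X Y : Type*} {a : Set X} {b : Set Y} {y : Y} :
    Sum.inr y ∈ sumSet a b ↔ y ∈ b := Iff.rfl

theorem sumSet_inj {X Y : Type*} {a a' : Set X} {b b' : Set Y} :
    sumSet a b = sumSet a' b' ↔ a = a' ∧ b = b' := by
  refine ⟨fun h => ⟨?_, ?_⟩, fun ⟨ha, hb⟩ => ha ▸ hb ▸ rfl⟩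
  · exact Set.ext fun x => Set.ext_iff.mp h (.inl x)
  · exact Set.ext fun y => Set.ext_iff.mp h (.inr y)

theorem actEmbeds_fullAct'_fullAct_sum (X : Type*) :
    ActEmbeds (fullAct' (X := X)) (fullAct (X := X ⊕ X)) := by
  refine ⟨fun c => sumSet Set.univ c,
    fun p => ⟨(sumSet Set.univ (p.1 ∪ p.2), sumSet p.1 p.2), ?_⟩, ?_, ?_, ?_⟩
  · rintro (x | x) hx
    · trivial
    · exact Or.inr hx
  · exact fun c c' h => (sumSet_inj.mp h).2
  · intro p q h
    obtain ⟨hd, hu⟩ := sumSet_inj.mp (congrArg (·.1.2) h)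
    exact Prod.ext hd hu
  · intro c p
    ext (x | x) <;> simp only [fullAct, fullAct', Set.mem_union, Set.mem_inter_iff,
      inl_mem_sumSet, inr_mem_sumSet, Set.mem_univ] <;> tauto

theorem actEmbeds_fullAct_of_embedding {X Y : Type*} (g : X ↪ Y) :
    ActEmbeds (fullAct (X := X)) (fullAct (X := Y)) := by
  have hg : Function.Injective (Set.image g) := Set.image_injective.mpr g.injective
  refine ⟨Set.image g, fun s => ⟨(g '' s.1.1, g '' s.1.2), Set.image_mono s.2⟩, hg, ?_, ?_⟩
  · intro s t h
    obtain ⟨hd, hu⟩ := Prod.ext_iff.mp (congrArg Subtype.val h)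
    exact Subtype.ext (Prod.ext (hg hd) (hg hu))
  · intro c s
    simp only [fullAct, Set.image_union, Set.image_inter g.injective]

/-- Every ↑↓'-action is an ↑↓-action and vice versa; in particular `F'(1)`
embeds into `F(1 ⊎ {x})`. -/
theorem stmt_16 {C S : Type u} (f : C → S → C) :
    ((∃ X : Type u, ActEmbeds f (fullAct' (X := X))) ↔
      (∃ X : Type u, ActEmbeds f (fullAct (X := X)))) ∧
    ActEmbeds (fullAct' (X := PUnit)) (fullAct (X := PUnit ⊕ PUnit)) := by
  refine ⟨⟨?_, ?_⟩, (actEmbeds_fullAct'_fullAct_sum PUnit).trans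
    (actEmbeds_fullAct_of_embedding (Equiv.sumCongr Equiv.punitEquivPUnit
      Equiv.punitEquivPUnit).toEmbedding)⟩
  · rintro ⟨X, hX⟩
    exact ⟨X ⊕ X, hX.trans (actEmbeds_fullAct'_fullAct_sum X)⟩
  · rintro ⟨X, hX⟩
    exact ⟨X, hX.trans (actEmbeds_fullAct_fullAct' X)⟩
end

section
/- Let B = (C, S↓, S↑) be a biaction satisfying idempotence, previous redundance, commutativity within S↓ and within S↑, and the basic and extra subset axioms, and let t ∈ S↓ ∪ S↑. Then the biaction B_t with C_t = {ct | c ∈ C}, the same sorts S↓ and S↑, and action c ∗ s = cst, also satisfies all of these axioms. -/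
universe u v w

/-- A biaction: `S↓` and `S↑` each act on `C`. -/
structure Biaction where
  C : Type u
  Sd : Type v
  Su : Type w
  fd : C → Sd → C
  fu : C → Su → C

/-- The combined action of `S↓ ∪ S↑` on `C`. -/
def Biaction.act (B : Biaction) (c : B.C) (x : B.Sd ⊕ B.Su) : B.C :=
  Sum.elim (B.fd c) (B.fu c) x

/-- The action of a word over `S↓ ∪ S↑` on `C`. -/
def Biaction.actW (B : Biaction) (c : B.C) (w : List (B.Sd ⊕ B.Su)) : B.C :=
  w.foldl B.act c

/-- Idempotence, previous redundance, commutativity within `S↓` and within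
`S↑`, and the basic and extra subset axioms. -/
def Biaction.SatisfiesAxioms (B : Biaction) : Prop :=
  (∀ c s, B.fd (B.fd c s) s = B.fd c s) ∧
  (∀ c t, B.fu (B.fu c t) t = B.fu c t) ∧
  (∀ c s t, B.fd (B.fu (B.fd c s) t) s = B.fd (B.fu c t) s) ∧
  (∀ c s t, B.fu (B.fd (B.fu c t) s) t = B.fu (B.fd c s) t) ∧
  (∀ c s u, B.fd (B.fd c s) u = B.fd (B.fd c u) s) ∧
  (∀ c t v, B.fu (B.fu c t) v = B.fu (B.fu c v) t) ∧
  (∀ c d e s t, B.fd c s = B.fd d s → B.fu c t = B.fu d t →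
    B.fd e s = B.fu e t → c = d) ∧
  (∀ c d e s t (w : List (B.Sd ⊕ B.Su)),
    B.actW (B.fd c s) w = B.actW (B.fd d s) w →
    B.actW (B.fu c t) w = B.actW (B.fu d t) w →
    B.actW (B.fd e s) w = B.actW (B.fu e t) w →
    B.actW c w = B.actW d w)

/-- The biaction `B_t`: carrier `C_t = {ct | c ∈ C}`, same sorts `S↓`, `S↑`,
and action `c ∗ s = cst`. -/
def Biaction.restrict (B : Biaction) (t : B.Sd ⊕ B.Su) : Biaction where
  C := {c : B.C // ∃ c₀ : B.C, B.act c₀ t = c}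
  Sd := B.Sd
  Su := B.Su
  fd c s := ⟨B.act (B.fd c.1 s) t, _, rfl⟩
  fu c u := ⟨B.act (B.fu c.1 u) t, _, rfl⟩

/-!
Every element of `C_t` is fixed by `t`, and in `B` a letter repeated after one other letter is
redundant: `c a b a = c b a` (previous redundance for distinct sorts, commutativity plus
idempotence for equal sorts). Hence acting in `B_t` by `a` then `b` is acting in `B` by `a t b t`,
which collapses to `a b t`; the equational axioms of `B_t` then reduce to those of `B`. A word `w`
acting on `C_t` is `w` with `t` inserted after every letter acting on `C`, so the subset
axioms of `B_t` for `w` (the basic one is the case `w = []`) are the extra subset axiom of `B`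
for the word `t` followed by this interleaving.
-/

namespace Biaction

variable {B : Biaction}

lemma actW_cons (c : B.C) (a : B.Sd ⊕ B.Su) (w : List (B.Sd ⊕ B.Su)) :
    B.actW c (a :: w) = B.actW (B.act c a) w :=
  rfl

lemma restrict_fd_val (t : B.Sd ⊕ B.Su) (c : (B.restrict t).C) (s : (B.restrict t).Sd) :
    ((B.restrict t).fd c s).1 = B.act (B.act c.1 (.inl s)) t :=
  rfl

lemma restrict_fu_val (t : B.Sd ⊕ B.Su) (c : (B.restrict t).C) (u : (B.restrict t).Su) :
    ((B.restrict t).fu c u).1 = B.act (B.act c.1 (.inr u)) t :=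
  rfl

lemma restrict_act_val (t : B.Sd ⊕ B.Su) (c : (B.restrict t).C) (a : B.Sd ⊕ B.Su) :
    ((B.restrict t).act c a).1 = B.act (B.act c.1 a) t := by
  cases a <;> rfl

lemma val_actW_restrict (t : B.Sd ⊕ B.Su) (w : List (B.Sd ⊕ B.Su)) (c : (B.restrict t).C) :
    ((B.restrict t).actW c w).1 = B.actW c.1 (w.flatMap fun a => [a, t]) := by
  induction w generalizing c with
  | nil => rfl
  | cons a w ih => exact (ih _).trans (congrArg (B.actW · _) (restrict_act_val t c a))

namespace SatisfiesAxioms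

lemma act_act_self (hB : B.SatisfiesAxioms) (c : B.C) (a : B.Sd ⊕ B.Su) :
    B.act (B.act c a) a = B.act c a := by
  cases a with
  | inl s => exact hB.1 c s
  | inr u => exact hB.2.1 c u

lemma act_act_act_self (hB : B.SatisfiesAxioms) (c : B.C) (a b : B.Sd ⊕ B.Su) :
    B.act (B.act (B.act c a) b) a = B.act (B.act c b) a := by
  obtain ⟨hd, hu, hdu, hud, hdd, huu, -⟩ := hB
  cases a with
  | inl s =>
    cases b with
    | inl s' =>
      show B.fd (B.fd (B.fd c s) s') s = B.fd (B.fd c s') s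
      rw [hdd _ s' s, hd, hdd c s s']
    | inr u => exact hdu c s u
  | inr u =>
    cases b with
    | inl s => exact hud c s u
    | inr u' =>
      show B.fu (B.fu (B.fu c u) u') u = B.fu (B.fu c u') u
      rw [huu _ u' u, hu, huu c u u']

lemma act_val_restrict (hB : B.SatisfiesAxioms) (t : B.Sd ⊕ B.Su) (c : (B.restrict t).C) :
    B.act c.1 t = c.1 := by
  obtain ⟨c, c₀, rfl⟩ := c
  exact hB.act_act_self c₀ t

lemma restrict_actW_eq (hB : B.SatisfiesAxioms) (t : B.Sd ⊕ B.Su) (c d e : (B.restrict t).C)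
    (s : B.Sd) (u : B.Su) (w : List (B.Sd ⊕ B.Su))
    (hs : (B.restrict t).actW ((B.restrict t).fd c s) w =
      (B.restrict t).actW ((B.restrict t).fd d s) w)
    (hu : (B.restrict t).actW ((B.restrict t).fu c u) w =
      (B.restrict t).actW ((B.restrict t).fu d u) w)
    (he : (B.restrict t).actW ((B.restrict t).fd e s) w =
      (B.restrict t).actW ((B.restrict t).fu e u) w) :
    (B.restrict t).actW c w = (B.restrict t).actW d w := by
  have val_eq : ∀ {x y : (B.restrict t).C}, (B.restrict t).actW x w = (B.restrict t).actW y w →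
      B.actW x.1 (w.flatMap fun a => [a, t]) = B.actW y.1 (w.flatMap fun a => [a, t]) :=
    fun h => by simpa only [val_actW_restrict] using congrArg Subtype.val h
  have extra_subset := hB.2.2.2.2.2.2.2
  have key := extra_subset c.1 d.1 e.1 s u (t :: w.flatMap fun a => [a, t])
    (val_eq hs) (val_eq hu) (val_eq he)
  rw [actW_cons, actW_cons, hB.act_val_restrict, hB.act_val_restrict] at key
  exact Subtype.ext (by simpa only [val_actW_restrict] using key)

end SatisfiesAxioms

end Biaction

/-- If a biaction satisfies idempotence, previous redundance, commutativity
within each sort, and the basic and extra subset axioms, then so does `B_t`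
for any `t ∈ S↓ ∪ S↑`. -/
theorem stmt_18 (B : Biaction) (hB : B.SatisfiesAxioms) (t : B.Sd ⊕ B.Su) :
    (B.restrict t).SatisfiesAxioms := by
  have fd_comm := hB.2.2.2.2.1
  have fu_comm := hB.2.2.2.2.2.1
  refine ⟨fun c s => ?_, fun c u => ?_, fun c s u => ?_, fun c s u => ?_,
    fun c s s' => ?_, fun c u u' => ?_, fun c d e s u => hB.restrict_actW_eq t c d e s u [],
    hB.restrict_actW_eq t⟩ <;>
    apply Subtype.ext <;>
    simp only [Biaction.restrict_fd_val, Biaction.restrict_fu_val, hB.act_act_act_self]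
  · exact congrArg (B.act · t) (fd_comm c.1 s s')
  · exact congrArg (B.act · t) (fu_comm c.1 u u')
end

section
/- There exists a 6-element biaction (C = {c,d,e,f,1,2}, S↓ = {s}, S↑ = {t,u}) satisfying idempotence, previous redundance, commutativity in S↓ and S↑, and the basic subset axiom, whose associated one-sorted action has a nontrivial strong link between c and d (witnessed by the words su and st), and hence is not an ↑↓-action. Specifically: cs = e, ct = f, cu = c, ds = e, dt = d, du = f, es = e, et = d, eu = c, fs = e, ft = f, fu = f, 1s = 2, 1t = 1, 1u = 1, 2s = 2, 2t = 1, 2u = 1. -/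
/-!
In the full ↑↓-action every word acts as `y ↦ (y ∩ A) ∪ B` for fixed sets `A`, `B`. If such a
map fixes `a` and `b` and identifies `c` with `d`, then at a point `x` where `c` and `d` differ
we have `x ∈ A → x ∈ B`, so `x ∈ a ↔ x ∈ b`. Along a strong link from `c` to `d` membership of
`x` is therefore constant, which forces `x ∈ c ↔ x ∈ d`: the full action, and so every action
embedding into it, has only trivial strong links. The six-element example has the strong link
`c —su— 1 —st— d` with `c ≠ d`.
-/

/-- The `C`-sort elements are `c = 0`, `d = 1`, `e = 2`, `f = 3`, `1 = 4`,
`2 = 5`.  `S↓ = {s} = Unit`.  The action of `s`: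
`cs = ds = es = fs = e`, `1s = 2s = 2`. -/
def exFd (a : Fin 6) (_ : Unit) : Fin 6 := ![2, 2, 2, 2, 5, 5] a

/-- `S↑ = {t, u} = Bool` with `t = false`, `u = true`.  The action:
`ct = f, dt = d, et = d, ft = f, 1t = 1, 2t = 1` and
`cu = c, du = f, eu = c, fu = f, 1u = 1, 2u = 1`. -/
def exFu (a : Fin 6) (b : Bool) : Fin 6 :=
  if b then ![0, 3, 0, 3, 4, 4] a else ![3, 1, 1, 3, 4, 4] a

/-- The associated one-sorted action on `S = S↓ ⊕ S↑`. -/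
def exA (a : Fin 6) (x : Unit ⊕ Bool) : Fin 6 := Sum.elim (exFd a) (exFu a) x

open Relation

section StrongLink

variable {C S : Type*}

def StrongLinkStep (f : C → S → C) (c d a b : C) : Prop :=
  ∃ w : List S, w.foldl f a = a ∧ w.foldl f b = b ∧ w.foldl f c = w.foldl f d

/-- The chain `c = a₀, …, aₙ = d` of the paper, consecutive `aᵢ` joined by a word `wᵢ`;
`n = 0` is the trivial link `c = d`. -/
def StrongLink (f : C → S → C) (c d : C) : Prop :=
  ReflTransGen (StrongLinkStep f c d) c d

theorem StrongLink.map {C' S' : Type*} {f : C → S → C} {f' : C' → S' → C'}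
    {iC : C → C'} {iS : S → S'} (hcomm : ∀ c s, iC (f c s) = f' (iC c) (iS s)) {c d : C}
    (h : StrongLink f c d) : StrongLink f' (iC c) (iC d) := by
  have foldl_map : ∀ (w : List S) (a : C), (w.map iS).foldl f' (iC a) = iC (w.foldl f a) :=
    fun w a => by
      rw [List.foldl_map]
      exact List.foldl_hom iC (fun x y => (hcomm x y).symm)
  refine ReflTransGen.lift iC (fun a b ⟨w, ha, hb, hcd⟩ => ⟨w.map iS, ?_, ?_, ?_⟩) c d h
  · rw [foldl_map, ha]
  · rw [foldl_map, hb]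
  · rw [foldl_map, foldl_map, hcd]

end StrongLink

section FullAction

variable {X : Type*}

theorem exists_foldl_fullAct_eq (w : List (FullS X)) :
    ∃ A B : Set X, ∀ y, w.foldl fullAct y = y ∩ A ∪ B := by
  induction w with
  | nil => exact ⟨Set.univ, ∅, fun y => by simp⟩
  | cons s w ih =>
    obtain ⟨A, B, hAB⟩ := ih
    refine ⟨s.1.1 ∩ A, s.1.2 ∩ A ∪ B, fun y => ?_⟩
    rw [List.foldl_cons, hAB, fullAct]
    ext x
    simp only [Set.mem_union, Set.mem_inter_iff]
    tauto

theorem mem_iff_mem_of_inter_union {A B a b c d : Set X} {x : X}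
    (ha : a ∩ A ∪ B = a) (hb : b ∩ A ∪ B = b) (hcd : c ∩ A ∪ B = d ∩ A ∪ B)
    (hx : ¬(x ∈ c ↔ x ∈ d)) : x ∈ a ↔ x ∈ b := by
  have ea := Set.ext_iff.mp ha x
  have eb := Set.ext_iff.mp hb x
  have ecd := Set.ext_iff.mp hcd x
  simp only [Set.mem_union, Set.mem_inter_iff] at ea eb ecd
  tauto

theorem StrongLink.eq_of_fullAct {c d : Set X} (h : StrongLink (fullAct (X := X)) c d) :
    c = d := by
  ext x
  by_contra hx
  suffices ∀ b, ReflTransGen (StrongLinkStep fullAct c d) c b → (x ∈ c ↔ x ∈ b) from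
    hx (this d h)
  intro b hb
  induction hb with
  | refl => rfl
  | tail _ hstep ih =>
    obtain ⟨w, ha, hb, hcd⟩ := hstep
    obtain ⟨A, B, hAB⟩ := exists_foldl_fullAct_eq w
    simp only [hAB] at ha hb hcd
    exact ih.trans (mem_iff_mem_of_inter_union ha hb hcd hx)

theorem not_actEmbeds_fullAct_of_strongLink {C S : Type*} {f : C → S → C} {c d : C}
    (h : StrongLink f c d) (hcd : c ≠ d) : ¬ActEmbeds f (fullAct (X := X)) := by
  rintro ⟨iC, iS, hiC, -, hcomm⟩
  exact hcd (hiC (h.map hcomm).eq_of_fullAct)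

end FullAction

theorem exA_strongLink : StrongLink exA 0 1 :=
  ReflTransGen.head (b := 4) ⟨[Sum.inl (), Sum.inr true], by decide, by decide, by decide⟩ <|
    ReflTransGen.single ⟨[Sum.inl (), Sum.inr false], by decide, by decide, by decide⟩

/-- There is a 6-element biaction satisfying idempotence, previous redundance,
commutativity within each sort and the basic subset axiom, whose associated
action has a nontrivial strong link between `c` and `d` (witnessed by the
words `su` and `st`), and hence is not an ↑↓-action. -/
theorem stmt_19 :
    (∀ (c : Fin 6) (s : Unit), exFd (exFd c s) s = exFd c s) ∧
    (∀ (c : Fin 6) (t : Bool), exFu (exFu c t) t = exFu c t) ∧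
    (∀ (c : Fin 6) (s : Unit) (t : Bool),
      exFd (exFu (exFd c s) t) s = exFd (exFu c t) s) ∧
    (∀ (c : Fin 6) (s : Unit) (t : Bool),
      exFu (exFd (exFu c t) s) t = exFu (exFd c s) t) ∧
    (∀ (c : Fin 6) (s u : Unit), exFd (exFd c s) u = exFd (exFd c u) s) ∧
    (∀ (c : Fin 6) (t v : Bool), exFu (exFu c t) v = exFu (exFu c v) t) ∧
    (∀ (c d e : Fin 6) (s : Unit) (t : Bool),
      exFd c s = exFd d s → exFu c t = exFu d t → exFd e s = exFu e t → c = d) ∧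
    -- the nontrivial strong link between `c = 0` and `d = 1`,
    -- witnessed by the words `w₁ = su`, `w₂ = st`, with middle element `1 = 4`:
    (([Sum.inl (), Sum.inr true].foldl exA (0 : Fin 6) = 0) ∧
     ([Sum.inl (), Sum.inr true].foldl exA (4 : Fin 6) = 4) ∧
     ([Sum.inl (), Sum.inr false].foldl exA (4 : Fin 6) = 4) ∧
     ([Sum.inl (), Sum.inr false].foldl exA (1 : Fin 6) = 1) ∧
     ([Sum.inl (), Sum.inr true].foldl exA (0 : Fin 6) =
      [Sum.inl (), Sum.inr true].foldl exA (1 : Fin 6)) ∧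
     ([Sum.inl (), Sum.inr false].foldl exA (0 : Fin 6) =
      [Sum.inl (), Sum.inr false].foldl exA (1 : Fin 6)) ∧
     (0 : Fin 6) ≠ 1) ∧
    ¬ ∃ X : Type, ActEmbeds exA (fullAct (X := X)) := by
  refine ⟨by decide, by decide, by decide, by decide, by decide, by decide, by decide,
    by decide, ?_⟩
  rintro ⟨X, hemb⟩
  exact not_actEmbeds_fullAct_of_strongLink exA_strongLink (by decide) hemb
end
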